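/- arXiv:2207.01365 — 9 statements merged into one kernel-verified Lean document; each statement's English description precedes it below -/
import Mathlib

section
/- Let n ≥ 2 be an even positive integer and let x_1 ≤ x_2 ≤ ... ≤ x_n be real numbers that are not all equal. Then for every real number p ≥ 1, the sum over all pairs 1 ≤ i < j ≤ n of |x_i - x_j|^p is at most (n²/4)·(x_n - x_1)^p. -/
/-!
Since `p ≥ 1`, each term satisfies `|x i - x j| ^ p ≤ (x j - x i) * R ^ (p - 1)` with
`R = x (n-1) - x 0`, so it suffices to bound the linear pair sum `∑_{i<j} (x j - x i)` by
`(n² / 4) R`. Writing each difference as a sum of consecutive gaps, the gap `x (k+1) - x k` is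
counted once for each pair `i ≤ k < j`, that is `(k + 1) (n - 1 - k) ≤ n² / 4` times, and the
gaps add up to `R`.
-/

open Finset

namespace Real

theorem rpow_eq_mul_rpow_sub_one {x p : ℝ} (hx : 0 ≤ x) (hp : p ≠ 0) :
    x ^ p = x * x ^ (p - 1) := by
  rw [← rpow_one_add' hx (by rwa [add_sub_cancel]), add_sub_cancel]

theorem rpow_le_mul_rpow_sub_one {x y p : ℝ} (hx : 0 ≤ x) (hxy : x ≤ y) (hp : 1 ≤ p) :
    x ^ p ≤ x * y ^ (p - 1) :=
  calc x ^ p = x * x ^ (p - 1) := rpow_eq_mul_rpow_sub_one hx (by linarith)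
    _ ≤ x * y ^ (p - 1) := by gcongr

end Real

theorem sum_range_sub_eq_sum_mul_sub_succ (x : ℕ → ℝ) (n : ℕ) :
    ∑ i ∈ range n, (x n - x i) = ∑ k ∈ range n, ((k : ℝ) + 1) * (x (k + 1) - x k) := by
  induction n with
  | zero => simp
  | succ n ih =>
    rw [sum_range_succ, sum_range_succ, ← ih]
    simp only [sum_sub_distrib, sum_const, card_range, nsmul_eq_mul]
    ring

theorem sum_pairs_sub_eq_sum_mul_sub_succ (x : ℕ → ℝ) (n : ℕ) :
    ∑ i ∈ range (n + 1), ∑ j ∈ range (n + 1), (if i < j then x j - x i else 0)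
      = ∑ k ∈ range n, ((k : ℝ) + 1) * (n - k) * (x (k + 1) - x k) := by
  induction n with
  | zero => simp
  | succ n ih =>
    have hlast : ∑ j ∈ range (n + 2), (if n + 1 < j then x j - x (n + 1) else 0) = 0 :=
      sum_eq_zero fun j hj => if_neg (by have := mem_range.1 hj; omega)
    have hrow : ∀ i ∈ range (n + 1), ∑ j ∈ range (n + 2), (if i < j then x j - x i else 0)
        = ∑ j ∈ range (n + 1), (if i < j then x j - x i else 0) + (x (n + 1) - x i) :=
      fun i hi => by rw [sum_range_succ, if_pos (mem_range.1 hi)]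
    rw [sum_range_succ, hlast, add_zero, sum_congr rfl hrow, sum_add_distrib, ih,
      sum_range_sub_eq_sum_mul_sub_succ]
    simp only [sum_range_succ _ n]
    rw [← add_assoc, ← sum_add_distrib]
    congr 1
    · exact sum_congr rfl fun k _ => by push_cast; ring
    · push_cast; ring

theorem sum_pairs_sub_le (n : ℕ) (x : ℕ → ℝ) (hmono : ∀ i j, i ≤ j → j < n → x i ≤ x j) :
    ∑ i ∈ range n, ∑ j ∈ range n, (if i < j then x j - x i else 0)
      ≤ (n : ℝ) ^ 2 / 4 * (x (n - 1) - x 0) := by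
  cases n with
  | zero => simp
  | succ m =>
    rw [sum_pairs_sub_eq_sum_mul_sub_succ]
    calc ∑ k ∈ range m, ((k : ℝ) + 1) * (m - k) * (x (k + 1) - x k)
        ≤ ∑ k ∈ range m, ((m : ℝ) + 1) ^ 2 / 4 * (x (k + 1) - x k) := by
          refine sum_le_sum fun k hk => ?_
          have hk := mem_range.1 hk
          have hcount := four_mul_le_sq_add ((k : ℝ) + 1) (m - k)
          gcongr
          · exact sub_nonneg.2 (hmono k (k + 1) k.le_succ (by omega))
          · linarith
      _ = ((m + 1 : ℕ) : ℝ) ^ 2 / 4 * (x (m + 1 - 1) - x 0) := by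
          rw [← mul_sum, sum_range_sub, Nat.add_sub_cancel]
          push_cast
          ring

theorem range_type_upper_bound_even_general
    (n : ℕ) (x : ℕ → ℝ)
    (hmono : ∀ i j, i ≤ j → j < n → x i ≤ x j)
    (p : ℝ) (hp : 1 ≤ p) :
    ∑ i ∈ Finset.range n, ∑ j ∈ Finset.range n,
        (if i < j then |x i - x j| ^ p else 0)
      ≤ ((n : ℝ) ^ 2 / 4) * (x (n - 1) - x 0) ^ p := by
  set R := x (n - 1) - x 0
  have hR : 0 ≤ R := by
    rcases n with _ | n
    · simp [R]
    · exact sub_nonneg.2 (hmono 0 _ n.zero_le (by omega))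
  have hterm : ∀ i ∈ range n, ∀ j ∈ range n, (if i < j then |x i - x j| ^ p else 0)
      ≤ (if i < j then x j - x i else 0) * R ^ (p - 1) := by
    intro i hi j hj
    have hi := mem_range.1 hi
    have hj := mem_range.1 hj
    split_ifs with hij
    · have hdiff := sub_nonneg.2 (hmono i j hij.le hj)
      rw [abs_sub_comm, abs_of_nonneg hdiff]
      exact Real.rpow_le_mul_rpow_sub_one hdiff
        (sub_le_sub (hmono j _ (by omega) (by omega)) (hmono 0 i i.zero_le hi)) hp
    · simp
  calc _ ≤ ∑ i ∈ range n, ∑ j ∈ range n, (if i < j then x j - x i else 0) * R ^ (p - 1) :=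
        sum_le_sum fun i hi => sum_le_sum (hterm i hi)
    _ = (∑ i ∈ range n, ∑ j ∈ range n, (if i < j then x j - x i else 0)) * R ^ (p - 1) := by
        simp only [sum_mul]
    _ ≤ ((n : ℝ) ^ 2 / 4 * R) * R ^ (p - 1) := by gcongr; exact sum_pairs_sub_le n x hmono
    _ = (n : ℝ) ^ 2 / 4 * R ^ p := by
        rw [mul_assoc, ← Real.rpow_eq_mul_rpow_sub_one hR (by linarith)]

/-- For `n ≥ 2` even and `x_1 ≤ ⋯ ≤ x_n` (0-indexed `x 0 ≤ ⋯ ≤ x (n-1)`)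
real numbers not all equal, for every real `p ≥ 1`,
`∑_{i<j} |x i - x j|^p ≤ (n²/4) (x (n-1) - x 0)^p`. -/
theorem range_type_upper_bound_even
    (n : ℕ) (hn : 2 ≤ n) (hEven : Even n) (x : ℕ → ℝ)
    (hmono : ∀ i j, i ≤ j → j < n → x i ≤ x j)
    (hne : ∃ i < n, ∃ j < n, x i ≠ x j)
    (p : ℝ) (hp : 1 ≤ p) :
    ∑ i ∈ Finset.range n, ∑ j ∈ Finset.range n,
        (if i < j then |x i - x j| ^ p else 0)
      ≤ ((n : ℝ) ^ 2 / 4) * (x (n - 1) - x 0) ^ p :=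
  range_type_upper_bound_even_general n x hmono p hp
end

section
/- Let n ≥ 2 be an odd positive integer and let x_1 ≤ x_2 ≤ ... ≤ x_n be real numbers that are not all equal. Then for every real number p ≥ 1, the sum over all pairs 1 ≤ i < j ≤ n of |x_i - x_j|^p is at most ((n² - 1)/4)·(x_n - x_1)^p. -/
/-! For `p ≥ 1` and `0 ≤ d ≤ R` we have `d ^ p ≤ R ^ (p - 1) * d`, so it suffices to treat `p = 1`.
There `∑_{i<j} (x j - x i) = ∑_k (2k - (n - 1)) x k`; for `n = 2m + 1` the weights are nonpositive
for `k ≤ m` and nonnegative for `k > m`, so the sum only grows when `x` is replaced by the step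
function equal to `x 0` up to `m` and to `x (2m)` after it, which gives `m (m + 1) R = ((n² - 1)/4) R`.
-/

open Finset

noncomputable def pairSum (n : ℕ) (f : ℕ → ℕ → ℝ) : ℝ :=
  ∑ i ∈ range n, ∑ j ∈ range n, if i < j then f i j else 0

theorem pairSum_succ (n : ℕ) (f : ℕ → ℕ → ℝ) :
    pairSum (n + 1) f = pairSum n f + ∑ i ∈ range n, f i n := by
  have hrow : ∑ j ∈ range n, (if n < j then f n j else 0) = 0 :=
    sum_eq_zero fun j hj => if_neg (mem_range.mp hj).not_gt
  have hcol : ∑ i ∈ range n, (if i < n then f i n else 0) = ∑ i ∈ range n, f i n :=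
    sum_congr rfl fun i hi => if_pos (mem_range.mp hi)
  simp only [pairSum, sum_range_succ, sum_add_distrib, lt_irrefl, if_false, add_zero, hrow, hcol]

theorem pairSum_sub_eq (n : ℕ) (x : ℕ → ℝ) :
    pairSum n (fun i j => x j - x i) = ∑ k ∈ range n, (2 * k - (n - 1) : ℝ) * x k := by
  induction n with
  | zero => simp [pairSum]
  | succ n ih =>
    have h : ∀ k : ℕ, (2 * k - ((n + 1 : ℕ) - 1) : ℝ) * x k = (2 * k - (n - 1)) * x k - x k :=
      fun k => by push_cast; ring
    rw [pairSum_succ, ih, sum_range_succ _ n, sum_sub_distrib, sum_const, card_range, nsmul_eq_mul]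
    simp only [h, sum_sub_distrib]
    ring

theorem pairSum_le_pairSum {n : ℕ} {f g : ℕ → ℕ → ℝ}
    (h : ∀ i j, i < j → j < n → f i j ≤ g i j) : pairSum n f ≤ pairSum n g := by
  refine sum_le_sum fun i _ => sum_le_sum fun j hj => ?_
  split_ifs with hij
  · exact h i j hij (mem_range.mp hj)
  · rfl

theorem mul_pairSum (c : ℝ) (n : ℕ) (f : ℕ → ℕ → ℝ) :
    c * pairSum n f = pairSum n fun i j => c * f i j := by
  simp only [pairSum, mul_sum, mul_ite, mul_zero]

theorem sum_range_two_mul_natCast (n : ℕ) : ∑ k ∈ range n, (2 * k : ℝ) = n * (n - 1) := by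
  induction n with
  | zero => simp
  | succ n ih => rw [sum_range_succ, ih]; push_cast; ring

theorem pairSum_sub_le_of_odd (m : ℕ) (x : ℕ → ℝ)
    (hx : ∀ i j, i ≤ j → j < 2 * m + 1 → x i ≤ x j) :
    pairSum (2 * m + 1) (fun i j => x j - x i) ≤ m * (m + 1) * (x (2 * m) - x 0) := by
  have hlow : ∑ k ∈ range (m + 1), (2 * k - 2 * m : ℝ) = -(m * (m + 1)) := by
    rw [sum_sub_distrib, sum_range_two_mul_natCast]; simp; ring
  have hhigh : ∑ j ∈ range m, (2 * j + 2 : ℝ) = m * (m + 1) := by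
    rw [sum_add_distrib, sum_range_two_mul_natCast]; simp; ring
  calc pairSum (2 * m + 1) (fun i j => x j - x i)
      = ∑ k ∈ range (m + 1), (2 * k - 2 * m : ℝ) * x k
          + ∑ j ∈ range m, (2 * j + 2 : ℝ) * x (m + 1 + j) := by
        rw [pairSum_sub_eq, show 2 * m + 1 = m + 1 + m by omega, sum_range_add]
        congr 1 <;> exact sum_congr rfl fun k _ => by push_cast; ring
    _ ≤ ∑ k ∈ range (m + 1), (2 * k - 2 * m : ℝ) * x 0
          + ∑ j ∈ range m, (2 * j + 2 : ℝ) * x (2 * m) := by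
        refine add_le_add (sum_le_sum fun k hk => ?_) (sum_le_sum fun j hj => ?_)
        · have hk := mem_range.mp hk
          have hkm : (k : ℝ) ≤ m := by exact_mod_cast Nat.lt_succ_iff.mp hk
          exact mul_le_mul_of_nonpos_left (hx 0 k k.zero_le (by omega)) (by linarith)
        · have hj := mem_range.mp hj
          exact mul_le_mul_of_nonneg_left (hx _ _ (by omega) (by omega)) (by positivity)
    _ = m * (m + 1) * (x (2 * m) - x 0) := by
        rw [← sum_mul, ← sum_mul, hlow, hhigh]; ring

theorem rpow_le_rpow_sub_one_mul {d R p : ℝ} (hd : 0 ≤ d) (hdR : d ≤ R) (hp : 1 ≤ p) :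
    d ^ p ≤ R ^ (p - 1) * d := by
  calc d ^ p = d ^ (p - 1) * d := by
        rw [← Real.rpow_add_one' hd (by linarith), sub_add_cancel]
    _ ≤ R ^ (p - 1) * d := by gcongr

theorem pairSum_abs_rpow_le {n : ℕ} {x : ℕ → ℝ} (hx : ∀ i j, i ≤ j → j < n → x i ≤ x j)
    {p : ℝ} (hp : 1 ≤ p) :
    pairSum n (fun i j => |x i - x j| ^ p)
      ≤ (x (n - 1) - x 0) ^ (p - 1) * pairSum n (fun i j => x j - x i) := by
  rw [mul_pairSum]
  refine pairSum_le_pairSum fun i j hij hjn => ?_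
  have hxij : x i ≤ x j := hx i j hij.le hjn
  rw [abs_sub_comm, abs_of_nonneg (sub_nonneg.mpr hxij)]
  refine rpow_le_rpow_sub_one_mul (sub_nonneg.mpr hxij) ?_ hp
  have := hx 0 i i.zero_le (by omega)
  have := hx j (n - 1) (by omega) (by omega)
  linarith

theorem range_type_upper_bound_odd_general
    (n : ℕ) (hOdd : Odd n) (x : ℕ → ℝ)
    (hmono : ∀ i j, i ≤ j → j < n → x i ≤ x j)
    (p : ℝ) (hp : 1 ≤ p) :
    ∑ i ∈ Finset.range n, ∑ j ∈ Finset.range n,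
        (if i < j then |x i - x j| ^ p else 0)
      ≤ (((n : ℝ) ^ 2 - 1) / 4) * (x (n - 1) - x 0) ^ p := by
  obtain ⟨m, rfl⟩ := hOdd
  have hR : 0 ≤ x (2 * m) - x 0 := sub_nonneg.mpr (hmono 0 _ (Nat.zero_le _) (by omega))
  have hRp : (x (2 * m) - x 0) ^ (p - 1) * (x (2 * m) - x 0) = (x (2 * m) - x 0) ^ p := by
    rw [← Real.rpow_add_one' hR (by linarith), sub_add_cancel]
  calc pairSum (2 * m + 1) (fun i j => |x i - x j| ^ p)
      ≤ (x (2 * m) - x 0) ^ (p - 1) * pairSum (2 * m + 1) (fun i j => x j - x i) :=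
        pairSum_abs_rpow_le hmono hp
    _ ≤ (x (2 * m) - x 0) ^ (p - 1) * (m * (m + 1) * (x (2 * m) - x 0)) := by
        gcongr
        exact pairSum_sub_le_of_odd m x hmono
    _ = (((2 * m + 1 : ℕ) : ℝ) ^ 2 - 1) / 4 * (x (2 * m + 1 - 1) - x 0) ^ p := by
        rw [Nat.add_sub_cancel, ← hRp]
        push_cast
        ring

/-- For `n ≥ 2` odd and `x_1 ≤ ⋯ ≤ x_n` real numbers not all equal,
for every real `p ≥ 1`, `∑_{i<j} |x i - x j|^p ≤ ((n²-1)/4) (x (n-1) - x 0)^p`. -/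
theorem range_type_upper_bound_odd
    (n : ℕ) (hn : 2 ≤ n) (hOdd : Odd n) (x : ℕ → ℝ)
    (hmono : ∀ i j, i ≤ j → j < n → x i ≤ x j)
    (hne : ∃ i < n, ∃ j < n, x i ≠ x j)
    (p : ℝ) (hp : 1 ≤ p) :
    ∑ i ∈ Finset.range n, ∑ j ∈ Finset.range n,
        (if i < j then |x i - x j| ^ p else 0)
      ≤ (((n : ℝ) ^ 2 - 1) / 4) * (x (n - 1) - x 0) ^ p :=
  range_type_upper_bound_odd_general n hOdd x hmono p hp
end

section
/- Let n ≥ 2 be a positive integer and let x_1 ≤ x_2 ≤ ... ≤ x_n be real numbers that are not all equal. Then for every real number p ≥ 1, the sum over all pairs 1 ≤ i < j ≤ n of |x_i - x_j|^p is at least ((n-2)/2^{p-1} + 1)·(x_n - x_1)^p. -/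
/-!
Keep only the pairs containing an endpoint. With `R = xₙ - x₁`, the pair `(x₁, xₙ)` contributes
`Rᵖ`, and each interior point `x_j` contributes `(x_j - x₁)ᵖ + (xₙ - x_j)ᵖ`, which by convexity of
`t ↦ tᵖ` is at least `Rᵖ / 2ᵖ⁻¹`.
-/

open Finset

lemma Real.rpow_add_le_mul_rpow_add_rpow {a b p : ℝ} (ha : 0 ≤ a) (hb : 0 ≤ b) (hp : 1 ≤ p) :
    (a + b) ^ p ≤ 2 ^ (p - 1) * (a ^ p + b ^ p) := by
  lift a to NNReal using ha
  lift b to NNReal using hb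
  exact_mod_cast NNReal.rpow_add_le_mul_rpow_add_rpow a b hp

lemma add_sum_endpoint_pairs_le_sum_range_sum_range (f : ℕ → ℕ → ℝ) (hf : ∀ i j, 0 ≤ f i j)
    (m : ℕ) :
    f 0 (m + 1) + ∑ j ∈ range m, (f 0 (j + 1) + f (j + 1) (m + 1))
      ≤ ∑ i ∈ range (m + 2), ∑ j ∈ range (m + 2), f i j := by
  have first_row : f 0 (m + 1) + ∑ j ∈ range m, f 0 (j + 1) ≤ ∑ j ∈ range (m + 2), f 0 j := by
    rw [sum_range_succ, sum_range_succ']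
    linarith [hf 0 0]
  have last_column :
      ∑ j ∈ range m, f (j + 1) (m + 1) ≤ ∑ i ∈ range (m + 1), ∑ j ∈ range (m + 2), f (i + 1) j :=
    calc ∑ j ∈ range m, f (j + 1) (m + 1)
        ≤ ∑ i ∈ range m, ∑ j ∈ range (m + 2), f (i + 1) j :=
          sum_le_sum fun i _ => single_le_sum (fun j _ => hf (i + 1) j) (by simp)
      _ ≤ ∑ i ∈ range (m + 1), ∑ j ∈ range (m + 2), f (i + 1) j :=
          sum_le_sum_of_subset_of_nonneg (range_subset_range.2 m.le_succ)
            fun i _ _ => sum_nonneg fun j _ => hf (i + 1) j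
  rw [sum_range_succ' _ (m + 1), sum_add_distrib]
  linarith

theorem range_type_lower_bound_general
    (n : ℕ) (hn : 2 ≤ n) (x : ℕ → ℝ)
    (hmono : ∀ i j, i ≤ j → j < n → x i ≤ x j)
    (p : ℝ) (hp : 1 ≤ p) :
    (((n : ℝ) - 2) / 2 ^ (p - 1) + 1) * (x (n - 1) - x 0) ^ p
      ≤ ∑ i ∈ Finset.range n, ∑ j ∈ Finset.range n,
          (if i < j then |x i - x j| ^ p else 0) := by
  obtain ⟨m, rfl⟩ : ∃ m, n = m + 2 := ⟨n - 2, by omega⟩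
  set f : ℕ → ℕ → ℝ := fun i j => if i < j then |x i - x j| ^ p else 0
  have hf : ∀ i j, 0 ≤ f i j := fun i j => by dsimp only [f]; split_ifs <;> positivity
  have hgap : ∀ i j, i < j → j ≤ m + 1 → f i j = (x j - x i) ^ p := fun i j hij hj => by
    simp only [f, if_pos hij, abs_sub_comm (x i),
      abs_of_nonneg (sub_nonneg.2 (hmono i j hij.le (by omega)))]
  have hinterior : ∀ j ∈ range m,
      (x (m + 1) - x 0) ^ p / 2 ^ (p - 1) ≤ f 0 (j + 1) + f (j + 1) (m + 1) := fun j hj => by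
    have hj : j < m := mem_range.1 hj
    rw [hgap 0 (j + 1) (by omega) (by omega), hgap (j + 1) (m + 1) (by omega) le_rfl,
      div_le_iff₀' (by positivity)]
    have h := Real.rpow_add_le_mul_rpow_add_rpow
      (sub_nonneg.2 (hmono 0 (j + 1) (by omega) (by omega)))
      (sub_nonneg.2 (hmono (j + 1) (m + 1) (by omega) (by omega))) hp
    rwa [sub_add_sub_cancel'] at h
  have hsum := card_nsmul_le_sum _ _ _ hinterior
  rw [card_range, nsmul_eq_mul] at hsum
  calc ((((m + 2 : ℕ) : ℝ) - 2) / 2 ^ (p - 1) + 1) * (x (m + 2 - 1) - x 0) ^ p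
      = f 0 (m + 1) + m * ((x (m + 1) - x 0) ^ p / 2 ^ (p - 1)) := by
        rw [hgap 0 (m + 1) (by omega) le_rfl]; push_cast; ring_nf
    _ ≤ f 0 (m + 1) + ∑ j ∈ range m, (f 0 (j + 1) + f (j + 1) (m + 1)) := by gcongr
    _ ≤ _ := add_sum_endpoint_pairs_le_sum_range_sum_range f hf m

/-- For `n ≥ 2` and `x_1 ≤ ⋯ ≤ x_n` real numbers not all equal,
for every real `p ≥ 1`,
`((n-2)/2^(p-1) + 1) (x (n-1) - x 0)^p ≤ ∑_{i<j} |x i - x j|^p`. -/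
theorem range_type_lower_bound
    (n : ℕ) (hn : 2 ≤ n) (x : ℕ → ℝ)
    (hmono : ∀ i j, i ≤ j → j < n → x i ≤ x j)
    (hne : ∃ i < n, ∃ j < n, x i ≠ x j)
    (p : ℝ) (hp : 1 ≤ p) :
    (((n : ℝ) - 2) / 2 ^ (p - 1) + 1) * (x (n - 1) - x 0) ^ p
      ≤ ∑ i ∈ Finset.range n, ∑ j ∈ Finset.range n,
          (if i < j then |x i - x j| ^ p else 0) :=
  range_type_lower_bound_general n hn x hmono p hp
end

section
/- Let n ≥ 2 and let x_1 ≤ x_2 ≤ ... ≤ x_n be real numbers that are not all equal. Then n/2 ≤ Σ_{1 ≤ i < j ≤ n} |x_i - x_j|² / (x_n - x_1)² ≤ n²/4 if n is even, and n/2 ≤ Σ_{1 ≤ i < j ≤ n} |x_i - x_j|² / (x_n - x_1)² ≤ (n² - 1)/4 if n is odd. -/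
/-!
With `R = x (n - 1) - x 0`, Lagrange's identity writes `∑_{i<j} (x j - x i)²` as `n` times the
sum of squared deviations from the mean; keeping only the deviations of `x 0` and `x (n - 1)`,
whose squares add up to at least `R² / 2`, gives the lower bound.

For the upper bound, monotonicity gives `(x j - x i)² ≤ R (x j - x i)`, and the linear sum
`∑_{i<j} (x j - x i) = ∑ i, (2 i + 1 - n) x i` is at most `R / 2 * ∑ i, |2 i + 1 - n|` after
centering at the midpoint of `[x 0, x (n - 1)]`. The last sum is `⌊n² / 2⌋`.
-/

open Finset

theorem Finset.sum_range_sum_ite_lt {M : Type*} [AddCommMonoid M] (n : ℕ) (f : ℕ → ℕ → M) :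
    ∑ i ∈ range n, ∑ j ∈ range n, (if i < j then f i j else 0) =
      ∑ j ∈ range n, ∑ i ∈ range j, f i j := by
  rw [sum_comm]
  refine sum_congr rfl fun j hj => ?_
  rw [← sum_filter]
  congr 1
  ext i
  simp only [mem_filter, mem_range] at hj ⊢
  omega

section CommRing

variable {α : Type*} [CommRing α]

def sumSqDiff (x : ℕ → α) (n : ℕ) : α :=
  ∑ j ∈ range n, ∑ i ∈ range j, (x j - x i) ^ 2

theorem sumSqDiff_eq (x : ℕ → α) (n : ℕ) :
    sumSqDiff x n = n * ∑ i ∈ range n, x i ^ 2 - (∑ i ∈ range n, x i) ^ 2 := by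
  induction n with
  | zero => simp [sumSqDiff]
  | succ n ih =>
    rw [sumSqDiff] at ih ⊢
    have hrow : ∑ i ∈ range n, (x n - x i) ^ 2 =
        n * x n ^ 2 - 2 * x n * ∑ i ∈ range n, x i + ∑ i ∈ range n, x i ^ 2 := by
      simp only [sub_sq, sum_add_distrib, sum_sub_distrib, sum_const, card_range, nsmul_eq_mul,
        ← mul_sum]
    rw [sum_range_succ, ih, hrow, sum_range_succ, sum_range_succ]
    push_cast
    ring

theorem sumSqDiff_sub_const (x : ℕ → α) (c : α) (n : ℕ) :
    sumSqDiff (fun i => x i - c) n = sumSqDiff x n := by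
  simp only [sumSqDiff, sub_sub_sub_cancel_right]

theorem sum_range_sum_sub_eq (y : ℕ → α) (n : ℕ) :
    ∑ j ∈ range n, ∑ i ∈ range j, (y j - y i) = ∑ i ∈ range n, (2 * i + 1 - n) * y i := by
  induction n with
  | zero => simp
  | succ n ih =>
    have hcoeff : ∑ i ∈ range n, (2 * (i : α) + 1 - (n + 1 : ℕ)) * y i =
        ∑ i ∈ range n, (2 * (i : α) + 1 - n) * y i - ∑ i ∈ range n, y i := by
      rw [← sum_sub_distrib]
      exact sum_congr rfl fun i _ => by push_cast; ring
    rw [sum_range_succ, ih, sum_range_succ _ n, hcoeff, sum_sub_distrib, sum_const, card_range,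
      nsmul_eq_mul]
    push_cast
    ring

end CommRing

theorem two_mul_sum_range_abs_two_mul_add_one_sub (n : ℕ) :
    2 * ∑ i ∈ range n, |2 * (i : ℝ) + 1 - n| = n ^ 2 - (n % 2 : ℕ) := by
  induction n using Nat.twoStepInduction with
  | zero => simp
  | one => norm_num
  | more n ih _ =>
    have hshift : ∀ i ∈ range n, |2 * ((i + 1 : ℕ) : ℝ) + 1 - (n + 2 : ℕ)| =
        |2 * (i : ℝ) + 1 - n| := fun i _ => by push_cast; ring_nf
    rw [sum_range_succ, sum_range_succ', sum_congr rfl hshift, Nat.add_mod_right]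
    have hends : |2 * ((n + 1 : ℕ) : ℝ) + 1 - (n + 2 : ℕ)| = n + 1 ∧
        |2 * ((0 : ℕ) : ℝ) + 1 - (n + 2 : ℕ)| = n + 1 := by
      push_cast
      constructor
      · rw [abs_of_nonneg] <;> linarith
      · rw [abs_of_nonpos] <;> linarith
    rw [hends.1, hends.2]
    push_cast at ih ⊢
    linarith

theorem half_mul_sq_sub_le_sumSqDiff (x : ℕ → ℝ) {n : ℕ} (hn : 2 ≤ n) :
    n / 2 * (x (n - 1) - x 0) ^ 2 ≤ sumSqDiff x n := by
  set m := (∑ i ∈ range n, x i) / n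
  have hvar : sumSqDiff x n = n * ∑ i ∈ range n, (x i - m) ^ 2 := by
    have hcentered : ∑ i ∈ range n, (x i - m) = 0 := by
      rw [sum_sub_distrib, sum_const, card_range, nsmul_eq_mul, mul_div_cancel₀ _ (by positivity),
        sub_self]
    rw [← sumSqDiff_sub_const x m, sumSqDiff_eq, hcentered]
    ring
  have hends : (x 0 - m) ^ 2 + (x (n - 1) - m) ^ 2 ≤ ∑ i ∈ range n, (x i - m) ^ 2 := by
    rw [← sum_pair (f := fun i => (x i - m) ^ 2) (show 0 ≠ n - 1 by omega)]
    refine sum_le_sum_of_subset_of_nonneg (fun i hi => ?_) fun _ _ _ => sq_nonneg _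
    simp only [mem_insert, mem_singleton, mem_range] at hi ⊢
    omega
  have hpair : (x (n - 1) - x 0) ^ 2 / 2 ≤ (x 0 - m) ^ 2 + (x (n - 1) - m) ^ 2 := by
    nlinarith [sq_nonneg (x 0 + x (n - 1) - 2 * m)]
  rw [hvar]
  calc n / 2 * (x (n - 1) - x 0) ^ 2 = n * ((x (n - 1) - x 0) ^ 2 / 2) := by ring
    _ ≤ n * ∑ i ∈ range n, (x i - m) ^ 2 := by gcongr; exact hpair.trans hends

theorem sumSqDiff_le_of_monotoneOn {x : ℕ → ℝ} {n : ℕ} (hx : MonotoneOn x (Set.Iio n)) :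
    sumSqDiff x n ≤ (x (n - 1) - x 0) ^ 2 / 2 * ∑ i ∈ range n, |2 * (i : ℝ) + 1 - n| := by
  set R := x (n - 1) - x 0 with hRdef
  set c := (x 0 + x (n - 1)) / 2 with hcdef
  have hbounds : ∀ i < n, x 0 ≤ x i ∧ x i ≤ x (n - 1) := fun i hi =>
    ⟨hx (by simp only [Set.mem_Iio]; omega) hi (Nat.zero_le i),
      hx hi (by simp only [Set.mem_Iio]; omega) (by omega)⟩
  have hR : 0 ≤ R := by
    rcases Nat.eq_zero_or_pos n with rfl | hn
    · simp [R]
    · exact sub_nonneg.mpr (hbounds 0 hn).2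
  calc sumSqDiff x n ≤ ∑ j ∈ range n, ∑ i ∈ range j, R * ((x j - c) - (x i - c)) := by
        refine sum_le_sum fun j hj => sum_le_sum fun i hi => ?_
        rw [mem_range] at hi hj
        have hij : x i ≤ x j := hx (hi.trans hj) hj hi.le
        have hi0 := (hbounds i (hi.trans hj)).1
        have hjn := (hbounds j hj).2
        rw [sub_sub_sub_cancel_right]
        nlinarith
    _ = R * ∑ i ∈ range n, (2 * i + 1 - n) * (x i - c) := by
        rw [← sum_range_sum_sub_eq]
        simp only [mul_sum]
    _ ≤ R * ∑ i ∈ range n, |2 * (i : ℝ) + 1 - n| * (R / 2) := by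
        refine mul_le_mul_of_nonneg_left (sum_le_sum fun i hi => ?_) hR
        have hdev : |x i - c| ≤ R / 2 := by
          obtain ⟨h0, h1⟩ := hbounds i (mem_range.mp hi)
          rw [abs_le]
          constructor <;> linarith [hRdef, hcdef]
        calc (2 * i + 1 - n) * (x i - c) ≤ |2 * (i : ℝ) + 1 - n| * |x i - c| := by
              rw [← abs_mul]; exact le_abs_self _
          _ ≤ |2 * (i : ℝ) + 1 - n| * (R / 2) := by gcongr
    _ = R ^ 2 / 2 * ∑ i ∈ range n, |2 * (i : ℝ) + 1 - n| := by
        rw [← sum_mul]; ring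

/-- For `n ≥ 2` and `x_1 ≤ ⋯ ≤ x_n` not all equal,
`n/2 ≤ ∑_{i<j} |x i - x j|² / (x (n-1) - x 0)²`, and the ratio is at most `n²/4`
if `n` is even and at most `(n²-1)/4` if `n` is odd. -/
theorem range_type_bounds_p_two
    (n : ℕ) (hn : 2 ≤ n) (x : ℕ → ℝ)
    (hmono : ∀ i j, i ≤ j → j < n → x i ≤ x j)
    (hne : ∃ i < n, ∃ j < n, x i ≠ x j) :
    (n : ℝ) / 2 ≤ (∑ i ∈ Finset.range n, ∑ j ∈ Finset.range n,
        (if i < j then |x i - x j| ^ 2 else 0)) / (x (n - 1) - x 0) ^ 2 ∧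
    (Even n →
      (∑ i ∈ Finset.range n, ∑ j ∈ Finset.range n,
          (if i < j then |x i - x j| ^ 2 else 0)) / (x (n - 1) - x 0) ^ 2
        ≤ (n : ℝ) ^ 2 / 4) ∧
    (Odd n →
      (∑ i ∈ Finset.range n, ∑ j ∈ Finset.range n,
          (if i < j then |x i - x j| ^ 2 else 0)) / (x (n - 1) - x 0) ^ 2
        ≤ ((n : ℝ) ^ 2 - 1) / 4) := by
  have hsum : ∑ i ∈ range n, ∑ j ∈ range n, (if i < j then |x i - x j| ^ 2 else 0) =
      sumSqDiff x n := by
    rw [sum_range_sum_ite_lt]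
    exact sum_congr rfl fun j _ => sum_congr rfl fun i _ => by rw [sq_abs, ← neg_sub, neg_sq]
  have hR : 0 < (x (n - 1) - x 0) ^ 2 := by
    obtain ⟨i, hi, j, hj, hij⟩ := hne
    have h0i := hmono 0 i (Nat.zero_le i) hi
    have hin := hmono i (n - 1) (by omega) (by omega)
    have h0j := hmono 0 j (Nat.zero_le j) hj
    have hjn := hmono j (n - 1) (by omega) (by omega)
    have hlt : x 0 < x (n - 1) := lt_of_not_ge fun h => hij (by linarith)
    exact pow_pos (sub_pos.mpr hlt) 2
  have hlow := half_mul_sq_sub_le_sumSqDiff x hn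
  have hup := sumSqDiff_le_of_monotoneOn (x := x) fun i hi j hj hij => hmono i j hij hj
  have hT := two_mul_sum_range_abs_two_mul_add_one_sub n
  rw [hsum, le_div_iff₀ hR, div_le_iff₀ hR, div_le_iff₀ hR]
  refine ⟨hlow, fun he => ?_, fun ho => ?_⟩
  · rw [Nat.even_iff.mp he] at hT
    push_cast at hT
    nlinarith
  · rw [Nat.odd_iff.mp ho] at hT
    push_cast at hT
    nlinarith
end

section
/- Let n ≥ 2 be even and let x_1 ≤ ... ≤ x_n and y_1 ≤ ... ≤ y_n be real numbers, each sequence not all equal. Then Σ_{i=1}^n (x_i - x̄)(y_i - ȳ) ≤ (n/4)·(x_n - x_1)(y_n - y_1), where x̄ = (1/n)Σ x_i and ȳ = (1/n)Σ y_i. -/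
/-!
By Cauchy–Schwarz the covariance sum is at most the geometric mean of the two sums of squared
deviations, and by Popoviciu's inequality each of these is at most `n/4` times the squared range:
the mean minimises `c ↦ ∑ (x i - c)^2`, and at the midpoint `c` of the range every term is at most
a quarter of the squared range.
-/

open Finset

variable {ι : Type*} (s : Finset ι)

theorem Finset.sum_sub_mean_sq_le_sum_sub_sq (f : ι → ℝ) (c : ℝ) :
    ∑ i ∈ s, (f i - (∑ j ∈ s, f j) / #s) ^ 2 ≤ ∑ i ∈ s, (f i - c) ^ 2 := by
  rcases s.eq_empty_or_nonempty with rfl | hs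
  · simp
  set m := (∑ j ∈ s, f j) / #s
  have hdev : ∑ i ∈ s, (f i - m) = 0 := by
    rw [sum_sub_distrib, sum_const, nsmul_eq_mul, mul_div_cancel₀ _ (by simp [hs.ne_empty]),
      sub_self]
  have hsplit : ∑ i ∈ s, (f i - c) ^ 2
      = ∑ i ∈ s, (f i - m) ^ 2 + 2 * (m - c) * ∑ i ∈ s, (f i - m) + #s * (m - c) ^ 2 := by
    rw [mul_sum, ← nsmul_eq_mul, ← sum_const, ← sum_add_distrib, ← sum_add_distrib]
    exact sum_congr rfl fun i _ => by ring
  rw [hsplit, hdev]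
  nlinarith [sq_nonneg (m - c)]

theorem Finset.sum_sub_mean_sq_le {f : ι → ℝ} {a b : ℝ} (hf : ∀ i ∈ s, f i ∈ Set.Icc a b) :
    ∑ i ∈ s, (f i - (∑ j ∈ s, f j) / #s) ^ 2 ≤ #s / 4 * (b - a) ^ 2 :=
  calc ∑ i ∈ s, (f i - (∑ j ∈ s, f j) / #s) ^ 2
      ≤ ∑ i ∈ s, (f i - (a + b) / 2) ^ 2 := s.sum_sub_mean_sq_le_sum_sub_sq f _
    _ ≤ ∑ _i ∈ s, ((b - a) / 2) ^ 2 :=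
        sum_le_sum fun i hi => by nlinarith [(hf i hi).1, (hf i hi).2]
    _ = #s / 4 * (b - a) ^ 2 := by rw [sum_const, nsmul_eq_mul]; ring

theorem Finset.sum_sub_mean_mul_sub_mean_le {f g : ι → ℝ} {a b c d : ℝ}
    (hf : ∀ i ∈ s, f i ∈ Set.Icc a b) (hg : ∀ i ∈ s, g i ∈ Set.Icc c d) :
    ∑ i ∈ s, (f i - (∑ j ∈ s, f j) / #s) * (g i - (∑ j ∈ s, g j) / #s)
      ≤ #s / 4 * (b - a) * (d - c) := by
  rcases s.eq_empty_or_nonempty with rfl | ⟨k, hk⟩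
  · simp
  have hab : 0 ≤ b - a := sub_nonneg.2 ((hf k hk).1.trans (hf k hk).2)
  have hcd : 0 ≤ d - c := sub_nonneg.2 ((hg k hk).1.trans (hg k hk).2)
  refine le_of_abs_le (abs_le_of_sq_le_sq ?_ (by positivity))
  calc (∑ i ∈ s, (f i - (∑ j ∈ s, f j) / #s) * (g i - (∑ j ∈ s, g j) / #s)) ^ 2
      ≤ (∑ i ∈ s, (f i - (∑ j ∈ s, f j) / #s) ^ 2) *
          ∑ i ∈ s, (g i - (∑ j ∈ s, g j) / #s) ^ 2 := sum_mul_sq_le_sq_mul_sq s _ _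
    _ ≤ (#s / 4 * (b - a) ^ 2) * (#s / 4 * (d - c) ^ 2) :=
        mul_le_mul (s.sum_sub_mean_sq_le hf) (s.sum_sub_mean_sq_le hg)
          (sum_nonneg fun _ _ => sq_nonneg _) (by positivity)
    _ = (#s / 4 * (b - a) * (d - c)) ^ 2 := by ring

theorem mem_Icc_of_monotone_on_range {n : ℕ} {x : ℕ → ℝ}
    (hx : ∀ i j, i ≤ j → j < n → x i ≤ x j) :
    ∀ i ∈ range n, x i ∈ Set.Icc (x 0) (x (n - 1)) := fun i hi =>
  have hi : i < n := mem_range.1 hi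
  ⟨hx 0 i i.zero_le hi, hx i (n - 1) (by omega) (by omega)⟩

theorem bivariate_upper_bound_even_general
    (n : ℕ) (x y : ℕ → ℝ)
    (hxmono : ∀ i j, i ≤ j → j < n → x i ≤ x j)
    (hymono : ∀ i j, i ≤ j → j < n → y i ≤ y j) :
    ∑ i ∈ Finset.range n,
        (x i - (∑ j ∈ Finset.range n, x j) / n) *
          (y i - (∑ j ∈ Finset.range n, y j) / n)
      ≤ ((n : ℝ) / 4) * (x (n - 1) - x 0) * (y (n - 1) - y 0) := by
  simpa only [card_range] using (range n).sum_sub_mean_mul_sub_mean_le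
    (mem_Icc_of_monotone_on_range hxmono) (mem_Icc_of_monotone_on_range hymono)

/-- For `n ≥ 2` even and nondecreasing sequences `x`, `y` each not all
equal, `∑ (x i - x̄)(y i - ȳ) ≤ (n/4)(x (n-1) - x 0)(y (n-1) - y 0)`. -/
theorem bivariate_upper_bound_even
    (n : ℕ) (hn : 2 ≤ n) (hEven : Even n) (x y : ℕ → ℝ)
    (hxmono : ∀ i j, i ≤ j → j < n → x i ≤ x j)
    (hymono : ∀ i j, i ≤ j → j < n → y i ≤ y j)
    (hxne : ∃ i < n, ∃ j < n, x i ≠ x j)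
    (hyne : ∃ i < n, ∃ j < n, y i ≠ y j) :
    ∑ i ∈ Finset.range n,
        (x i - (∑ j ∈ Finset.range n, x j) / n) *
          (y i - (∑ j ∈ Finset.range n, y j) / n)
      ≤ ((n : ℝ) / 4) * (x (n - 1) - x 0) * (y (n - 1) - y 0) :=
  bivariate_upper_bound_even_general n x y hxmono hymono
end

section
/- Let n ≥ 2 be odd and let x_1 ≤ ... ≤ x_n and y_1 ≤ ... ≤ y_n be real numbers, each sequence not all equal. Then Σ_{i=1}^n (x_i - x̄)(y_i - ȳ) ≤ ((n² - 1)/(4n))·(x_n - x_1)(y_n - y_1), where x̄ = (1/n)Σ x_i and ȳ = (1/n)Σ y_i. -/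
/-!
Multiplying by `n`, the centred sum becomes `∑_{j<i} (x_i - x_j)(y_i - y_j)` (Lagrange's identity).
Both factors are nonnegative and `x_i - x_j ≤ x_{n-1} - x_0`, so it remains to bound
`∑_{j<i} (y_i - y_j)`. Splitting each difference into consecutive gaps, the gap
`y_{k+1} - y_k` is counted once for each of the `(k + 1)(n - 1 - k)` pairs straddling it, and for
`n = 2m + 1` this count is at most `m(m + 1) = (n² - 1)/4`; the gaps sum to `y_{n-1} - y_0`.
-/

open Finset

theorem card_mul_sum_mul_sub_sum_mul_sum {R : Type*} [CommRing R] (x y : ℕ → R) (n : ℕ) :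
    n * ∑ i ∈ range n, x i * y i - (∑ i ∈ range n, x i) * ∑ i ∈ range n, y i =
      ∑ i ∈ range n, ∑ j ∈ range i, (x i - x j) * (y i - y j) := by
  induction n with
  | zero => simp
  | succ n ih =>
    have hlast : ∑ j ∈ range n, (x n - x j) * (y n - y j) =
        n * (x n * y n) - (∑ j ∈ range n, x j) * y n - x n * ∑ j ∈ range n, y j +
          ∑ j ∈ range n, x j * y j := by
      simp only [sub_mul, mul_sub, sum_sub_distrib, sum_const, card_range,
        nsmul_eq_mul, ← sum_mul, ← mul_sum]
      ring
    rw [sum_range_succ, sum_range_succ, sum_range_succ, sum_range_succ, ← ih, hlast]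
    push_cast
    ring

theorem sum_sub_mean_mul_sub_mean {K : Type*} [Field K] [CharZero K] (x y : ℕ → K) (n : ℕ) :
    ∑ i ∈ range n, (x i - (∑ j ∈ range n, x j) / n) * (y i - (∑ j ∈ range n, y j) / n) =
      (n * ∑ i ∈ range n, x i * y i - (∑ i ∈ range n, x i) * ∑ i ∈ range n, y i) / n := by
  rcases n.eq_zero_or_pos with rfl | hn
  · simp
  have hn' : (n : K) ≠ 0 := by exact_mod_cast hn.ne'
  simp only [sub_mul, mul_sub, sum_sub_distrib, ← sum_mul, ← mul_sum, sum_const, card_range,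
    nsmul_eq_mul]
  field_simp
  ring

theorem sum_range_sub_eq_sum_gaps {R : Type*} [CommRing R] (y : ℕ → R) (n : ℕ) :
    ∑ j ∈ range n, (y n - y j) = ∑ k ∈ range n, (k + 1) * (y (k + 1) - y k) := by
  induction n with
  | zero => simp
  | succ n ih =>
    have hshift : ∑ j ∈ range n, (y (n + 1) - y j) =
        ∑ j ∈ range n, (y n - y j) + n * (y (n + 1) - y n) := by
      simp only [sum_sub_distrib, sum_const, card_range, nsmul_eq_mul]
      ring
    rw [sum_range_succ, hshift, ih, sum_range_succ]
    ring

theorem sum_pairs_sub_eq_sum_gaps {R : Type*} [CommRing R] (y : ℕ → R) (n : ℕ) :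
    ∑ i ∈ range (n + 1), ∑ j ∈ range i, (y i - y j) =
      ∑ k ∈ range n, (k + 1) * (n - k) * (y (k + 1) - y k) := by
  induction n with
  | zero => simp
  | succ n ih =>
    rw [sum_range_succ, ih, sum_range_sub_eq_sum_gaps, sum_range_succ, sum_range_succ,
      ← add_assoc, ← sum_add_distrib]
    push_cast
    congr 1
    · exact sum_congr rfl fun k _ => by ring
    · ring

theorem add_one_mul_two_mul_sub_le (k m : ℕ) : ((k : ℝ) + 1) * (2 * m - k) ≤ m * (m + 1) := by
  rcases Nat.lt_or_ge k m with h | h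
  · have h' : (k : ℝ) + 1 ≤ m := by exact_mod_cast h
    nlinarith
  · have h' : (m : ℝ) ≤ k := by exact_mod_cast h
    nlinarith

theorem sum_pairs_sub_le_of_monotoneOn {y : ℕ → ℝ} {m : ℕ}
    (hy : MonotoneOn y (Set.Iic (2 * m))) :
    ∑ i ∈ range (2 * m + 1), ∑ j ∈ range i, (y i - y j) ≤ m * (m + 1) * (y (2 * m) - y 0) := by
  have hgap : ∀ k ∈ range (2 * m), 0 ≤ y (k + 1) - y k := fun k hk => by
    have hk : k + 1 ≤ 2 * m := mem_range.1 hk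
    exact sub_nonneg.2 (hy (Set.mem_Iic.2 (by omega)) (Set.mem_Iic.2 hk) k.le_succ)
  calc ∑ i ∈ range (2 * m + 1), ∑ j ∈ range i, (y i - y j)
      = ∑ k ∈ range (2 * m), (k + 1) * ((2 * m : ℕ) - k) * (y (k + 1) - y k) :=
        sum_pairs_sub_eq_sum_gaps y (2 * m)
    _ ≤ ∑ k ∈ range (2 * m), m * (m + 1) * (y (k + 1) - y k) := by
        refine sum_le_sum fun k hk => mul_le_mul_of_nonneg_right ?_ (hgap k hk)
        push_cast
        exact add_one_mul_two_mul_sub_le k m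
    _ = m * (m + 1) * (y (2 * m) - y 0) := by rw [← mul_sum, sum_range_sub]

theorem sum_pairs_mul_le_of_monotoneOn {x y : ℕ → ℝ} {N : ℕ}
    (hx : MonotoneOn x (Set.Iic N)) (hy : MonotoneOn y (Set.Iic N)) :
    ∑ i ∈ range (N + 1), ∑ j ∈ range i, (x i - x j) * (y i - y j) ≤
      (x N - x 0) * ∑ i ∈ range (N + 1), ∑ j ∈ range i, (y i - y j) := by
  simp only [mul_sum]
  refine sum_le_sum fun i hi => sum_le_sum fun j hj => ?_
  have hiN : i ≤ N := Nat.lt_succ_iff.1 (mem_range.1 hi)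
  have hji : j ≤ i := (mem_range.1 hj).le
  have hxi : x i ≤ x N := hx (Set.mem_Iic.2 hiN) (Set.mem_Iic.2 le_rfl) hiN
  have hxj : x 0 ≤ x j := hx (Set.mem_Iic.2 (Nat.zero_le N)) (Set.mem_Iic.2 (hji.trans hiN)) (Nat.zero_le j)
  have hyij : y j ≤ y i := hy (Set.mem_Iic.2 (hji.trans hiN)) (Set.mem_Iic.2 hiN) hji
  exact mul_le_mul_of_nonneg_right (by linarith) (sub_nonneg.2 hyij)

theorem bivariate_upper_bound_odd_general
    (n : ℕ) (hOdd : Odd n) (x y : ℕ → ℝ)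
    (hxmono : ∀ i j, i ≤ j → j < n → x i ≤ x j)
    (hymono : ∀ i j, i ≤ j → j < n → y i ≤ y j) :
    ∑ i ∈ Finset.range n,
        (x i - (∑ j ∈ Finset.range n, x j) / n) *
          (y i - (∑ j ∈ Finset.range n, y j) / n)
      ≤ (((n : ℝ) ^ 2 - 1) / (4 * n)) * (x (n - 1) - x 0) * (y (n - 1) - y 0) := by
  obtain ⟨m, rfl⟩ := hOdd
  have hx : MonotoneOn x (Set.Iic (2 * m)) := fun i _ j hj hij =>
    hxmono i j hij (Nat.lt_succ_of_le hj)
  have hy : MonotoneOn y (Set.Iic (2 * m)) := fun i _ j hj hij =>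
    hymono i j hij (Nat.lt_succ_of_le hj)
  have hRx : 0 ≤ x (2 * m) - x 0 :=
    sub_nonneg.2 (hx (Set.mem_Iic.2 (Nat.zero_le _)) (Set.mem_Iic.2 le_rfl) (Nat.zero_le _))
  have hpos : (0 : ℝ) < (2 * m + 1 : ℕ) := by positivity
  rw [sum_sub_mean_mul_sub_mean, card_mul_sum_mul_sub_sum_mul_sum, Nat.add_sub_cancel,
    div_le_iff₀ hpos]
  calc _ ≤ (x (2 * m) - x 0) * ∑ i ∈ range (2 * m + 1), ∑ j ∈ range i, (y i - y j) :=
        sum_pairs_mul_le_of_monotoneOn hx hy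
    _ ≤ (x (2 * m) - x 0) * (m * (m + 1) * (y (2 * m) - y 0)) :=
        mul_le_mul_of_nonneg_left (sum_pairs_sub_le_of_monotoneOn hy) hRx
    _ = _ := by
        push_cast
        field_simp
        ring

/-- For `n ≥ 2` odd and nondecreasing sequences `x`, `y` each not all
equal, `∑ (x i - x̄)(y i - ȳ) ≤ ((n²-1)/(4n))(x (n-1) - x 0)(y (n-1) - y 0)`. -/
theorem bivariate_upper_bound_odd
    (n : ℕ) (hn : 2 ≤ n) (hOdd : Odd n) (x y : ℕ → ℝ)
    (hxmono : ∀ i j, i ≤ j → j < n → x i ≤ x j)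
    (hymono : ∀ i j, i ≤ j → j < n → y i ≤ y j)
    (hxne : ∃ i < n, ∃ j < n, x i ≠ x j)
    (hyne : ∃ i < n, ∃ j < n, y i ≠ y j) :
    ∑ i ∈ Finset.range n,
        (x i - (∑ j ∈ Finset.range n, x j) / n) *
          (y i - (∑ j ∈ Finset.range n, y j) / n)
      ≤ (((n : ℝ) ^ 2 - 1) / (4 * n)) * (x (n - 1) - x 0) * (y (n - 1) - y 0) :=
  bivariate_upper_bound_odd_general n hOdd x y hxmono hymono
end

section
/- Let n ≥ 2 and let x_1 ≤ ... ≤ x_n and y_1 ≤ ... ≤ y_n be real numbers, each sequence not all equal. Then Σ_{i=1}^n (x_i - x̄)(y_i - ȳ) ≥ (1/n)·(x_n - x_1)(y_n - y_1), where x̄ = (1/n)Σ x_i and ȳ = (1/n)Σ y_i. -/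
/-!
Multiplying the covariance sum by `n` turns it into half of the double sum
`∑ i, ∑ j, (x i - x j) * (y i - y j)` (a Lagrange-type identity). For similarly ordered
sequences every term of the double sum is nonnegative, so the double sum is at least its two
terms indexed by the pairs of endpoints, which together
give `2 * (x (n - 1) - x 0) * (y (n - 1) - y 0)`.
-/

open Finset

theorem sum_sum_sub_mul_sub {ι R : Type*} [CommRing R] (s : Finset ι) (f g : ι → R) :
    ∑ i ∈ s, ∑ j ∈ s, (f i - f j) * (g i - g j)
      = 2 * (#s * ∑ i ∈ s, f i * g i - (∑ i ∈ s, f i) * ∑ i ∈ s, g i) := by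
  simp only [sub_mul, mul_sub, sum_sub_distrib, ← mul_sum, ← sum_mul, sum_const, nsmul_eq_mul,
    mul_left_comm (f _) (#s : R)]
  ring

theorem card_mul_sum_sub_mean_mul_sub_mean {ι K : Type*} [Field K] [CharZero K]
    (s : Finset ι) (f g : ι → K) :
    #s * ∑ i ∈ s, (f i - (∑ j ∈ s, f j) / #s) * (g i - (∑ j ∈ s, g j) / #s)
      = #s * ∑ i ∈ s, f i * g i - (∑ i ∈ s, f i) * ∑ i ∈ s, g i := by
  rcases s.eq_empty_or_nonempty with rfl | hs
  · simp
  have : (#s : K) ≠ 0 := by exact_mod_cast hs.card_ne_zero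
  simp only [sub_mul, mul_sub, sum_sub_distrib, ← mul_sum, ← sum_mul, sum_const, nsmul_eq_mul]
  field_simp
  ring

theorem MonovaryOn.sub_mul_sub_le_card_mul_sum_sub_mean_mul_sub_mean
    {ι K : Type*} [Field K] [LinearOrder K] [IsStrictOrderedRing K]
    {s : Finset ι} {f g : ι → K}
    (hfg : MonovaryOn f g s) {i j : ι} (hi : i ∈ s) (hj : j ∈ s) :
    (f i - f j) * (g i - g j)
      ≤ #s * ∑ k ∈ s, (f k - (∑ l ∈ s, f l) / #s) * (g k - (∑ l ∈ s, g l) / #s) := by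
  have hterm : ∀ k ∈ s, ∀ l ∈ s, 0 ≤ (f k - f l) * (g k - g l) :=
    fun k hk l hl => hfg.sub_mul_sub_nonneg hl hk
  have hrow : ∀ k ∈ s, 0 ≤ ∑ l ∈ s, (f k - f l) * (g k - g l) :=
    fun k hk => sum_nonneg (hterm k hk)
  have hdouble := sum_sum_sub_mul_sub s f g
  rw [← card_mul_sum_sub_mean_mul_sub_mean] at hdouble
  by_cases hij : i = j
  · subst hij
    have := sum_nonneg hrow
    simp only [sub_self, zero_mul]
    linarith
  classical
  have hi_row : (f i - f j) * (g i - g j) ≤ ∑ l ∈ s, (f i - f l) * (g i - g l) :=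
    single_le_sum (hterm i hi) hj
  have hj_row : (f j - f i) * (g j - g i) ≤ ∑ l ∈ s, (f j - f l) * (g j - g l) :=
    single_le_sum (hterm j hj) hi
  have hpair := sum_le_sum_of_subset_of_nonneg (insert_subset hi (singleton_subset_iff.2 hj))
    fun k hk _ => hrow k hk
  rw [sum_pair hij] at hpair
  have hsymm : (f j - f i) * (g j - g i) = (f i - f j) * (g i - g j) := by ring
  linarith

theorem bivariate_lower_bound_general
    (n : ℕ) (x y : ℕ → ℝ)
    (hxmono : ∀ i j, i ≤ j → j < n → x i ≤ x j)
    (hymono : ∀ i j, i ≤ j → j < n → y i ≤ y j) :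
    (1 / (n : ℝ)) * (x (n - 1) - x 0) * (y (n - 1) - y 0)
      ≤ ∑ i ∈ Finset.range n,
          (x i - (∑ j ∈ Finset.range n, x j) / n) *
            (y i - (∑ j ∈ Finset.range n, y j) / n) := by
  rcases n.eq_zero_or_pos with rfl | hn
  · simp
  have hmono {z : ℕ → ℝ} (hz : ∀ i j, i ≤ j → j < n → z i ≤ z j) :
      MonotoneOn z (range n : Set ℕ) :=
    fun i _ j hj hij => hz i j hij (by simpa using hj)
  have hxy : MonovaryOn x y (range n : Set ℕ) := (hmono hxmono).monovaryOn (hmono hymono)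
  have h := hxy.sub_mul_sub_le_card_mul_sum_sub_mean_mul_sub_mean
    (mem_range.2 (Nat.sub_lt hn one_pos)) (mem_range.2 hn)
  rw [card_range] at h
  rw [mul_assoc, one_div_mul_eq_div, div_le_iff₀' (by positivity)]
  exact h

/-- For `n ≥ 2` and nondecreasing sequences `x`, `y` each not all
equal, `(1/n)(x (n-1) - x 0)(y (n-1) - y 0) ≤ ∑ (x i - x̄)(y i - ȳ)`. -/
theorem bivariate_lower_bound
    (n : ℕ) (hn : 2 ≤ n) (x y : ℕ → ℝ)
    (hxmono : ∀ i j, i ≤ j → j < n → x i ≤ x j)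
    (hymono : ∀ i j, i ≤ j → j < n → y i ≤ y j)
    (hxne : ∃ i < n, ∃ j < n, x i ≠ x j)
    (hyne : ∃ i < n, ∃ j < n, y i ≠ y j) :
    (1 / (n : ℝ)) * (x (n - 1) - x 0) * (y (n - 1) - y 0)
      ≤ ∑ i ∈ Finset.range n,
          (x i - (∑ j ∈ Finset.range n, x j) / n) *
            (y i - (∑ j ∈ Finset.range n, y j) / n) :=
  bivariate_lower_bound_general n x y hxmono hymono
end

section
/- Let n = 2m + 1 with m ≥ 1 and suppose x_1 = ... = x_m < x_{m+1} = ... = x_n and y_1 = ... = y_m < y_{m+1} = ... = y_n (or, alternatively, x_1 = ... = x_{m+1} < x_{m+2} = ... = x_n and y_1 = ... = y_{m+1} < y_{m+2} = ... = y_n). Then Σ_{i=1}^n (x_i - x̄)(y_i - ȳ) = ((n² - 1)/(4n))·(x_n - x_1)(y_n - y_1); that is, the upper bound (n² - 1)/(4n) for s_{xy}/((x_n - x_1)(y_n - y_1)) is attained by these configurations. -/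
/-!
If both samples take only their extreme values and switch levels at the same index `k`, then
`s_xy = k (n - k) / n · (x_n - x_1)(y_n - y_1)`. Since `4 k (n - k) = n² - (n - 2k)²`, this
equals `(n² - 1) / (4n)` times the range product exactly when `|n - 2k| = 1`, i.e. for `k = m`
or `k = m + 1` when `n = 2m + 1`.
-/

open Finset

theorem sum_range_eq_of_split {M : Type*} [AddCommMonoid M] {n k : ℕ} (hk : k ≤ n)
    {f : ℕ → M} {a b : M} (hlo : ∀ i < k, f i = a) (hhi : ∀ i, k ≤ i → i < n → f i = b) :
    ∑ i ∈ range n, f i = k • a + (n - k) • b := by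
  rw [← sum_range_add_sum_Ico f hk, sum_congr rfl fun i hi => hlo i (mem_range.mp hi),
    sum_congr rfl fun i hi => hhi i (mem_Ico.mp hi).1 (mem_Ico.mp hi).2]
  simp

theorem sum_mul_centered_of_split {n k : ℕ} (hk : k ≤ n) {x y : ℕ → ℝ} {a b c d : ℝ}
    (hx₁ : ∀ i < k, x i = a) (hx₂ : ∀ i, k ≤ i → i < n → x i = b)
    (hy₁ : ∀ i < k, y i = c) (hy₂ : ∀ i, k ≤ i → i < n → y i = d) :
    ∑ i ∈ range n, (x i - (∑ j ∈ range n, x j) / n) * (y i - (∑ j ∈ range n, y j) / n)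
      = k * (n - k) / n * (b - a) * (d - c) := by
  rcases Nat.eq_zero_or_pos n with rfl | hn
  · simp
  have hn₀ : (n : ℝ) ≠ 0 := by positivity
  set μx := (∑ j ∈ range n, x j) / n
  set μy := (∑ j ∈ range n, y j) / n
  have hμx : μx = (k * a + (n - k) * b) / n := by
    simp [μx, sum_range_eq_of_split hk hx₁ hx₂, Nat.cast_sub hk]
  have hμy : μy = (k * c + (n - k) * d) / n := by
    simp [μy, sum_range_eq_of_split hk hy₁ hy₂, Nat.cast_sub hk]
  rw [sum_range_eq_of_split hk (b := (b - μx) * (d - μy))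
    (fun i hi => by rw [hx₁ i hi, hy₁ i hi]) (fun i h₁ h₂ => by rw [hx₂ i h₁ h₂, hy₂ i h₁ h₂])]
  simp only [nsmul_eq_mul, Nat.cast_sub hk, hμx, hμy]
  field_simp
  ring

theorem mul_sub_div_eq_of_sq_eq_one {n k : ℝ} (h : (n - 2 * k) ^ 2 = 1) :
    k * (n - k) / n = (n ^ 2 - 1) / (4 * n) := by
  rw [show n ^ 2 - 1 = 4 * (k * (n - k)) by linear_combination h,
    mul_div_mul_left _ _ four_ne_zero]

theorem bivariate_upper_bound_odd_attained_general
    (n m : ℕ) (hnm : n = 2 * m + 1) (x y : ℕ → ℝ)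
    (hconf :
      ((∀ i < m, x i = x 0) ∧ (∀ i, m ≤ i → i < n → x i = x (n - 1)) ∧
       (∀ i < m, y i = y 0) ∧ (∀ i, m ≤ i → i < n → y i = y (n - 1))) ∨
      ((∀ i < m + 1, x i = x 0) ∧ (∀ i, m + 1 ≤ i → i < n → x i = x (n - 1)) ∧
       (∀ i < m + 1, y i = y 0) ∧ (∀ i, m + 1 ≤ i → i < n → y i = y (n - 1)))) :
    ∑ i ∈ Finset.range n,
        (x i - (∑ j ∈ Finset.range n, x j) / n) *
          (y i - (∑ j ∈ Finset.range n, y j) / n)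
      = (((n : ℝ) ^ 2 - 1) / (4 * n)) * (x (n - 1) - x 0) * (y (n - 1) - y 0) := by
  have hn : (n : ℝ) = 2 * m + 1 := by exact_mod_cast hnm
  rcases hconf with ⟨hx₁, hx₂, hy₁, hy₂⟩ | ⟨hx₁, hx₂, hy₁, hy₂⟩
  · rw [sum_mul_centered_of_split (by omega) hx₁ hx₂ hy₁ hy₂,
      mul_sub_div_eq_of_sq_eq_one (by rw [hn]; ring)]
  · rw [sum_mul_centered_of_split (by omega) hx₁ hx₂ hy₁ hy₂,
      mul_sub_div_eq_of_sq_eq_one (by rw [hn]; push_cast; ring)]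

/-- For `n = 2m+1`, `m ≥ 1`, if both `x` and `y` split at `m`
(`x_1 = ⋯ = x_m < x_{m+1} = ⋯ = x_n` and likewise for `y`), or both split at `m+1`
(`x_1 = ⋯ = x_{m+1} < x_{m+2} = ⋯ = x_n` and likewise for `y`), then
`∑ (x i - x̄)(y i - ȳ) = ((n²-1)/(4n))(x (n-1) - x 0)(y (n-1) - y 0)`. -/
theorem bivariate_upper_bound_odd_attained
    (n m : ℕ) (hm : 1 ≤ m) (hnm : n = 2 * m + 1) (x y : ℕ → ℝ)
    (hconf :
      ((∀ i < m, x i = x 0) ∧ (∀ i, m ≤ i → i < n → x i = x (n - 1)) ∧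
       (∀ i < m, y i = y 0) ∧ (∀ i, m ≤ i → i < n → y i = y (n - 1))) ∨
      ((∀ i < m + 1, x i = x 0) ∧ (∀ i, m + 1 ≤ i → i < n → x i = x (n - 1)) ∧
       (∀ i < m + 1, y i = y 0) ∧ (∀ i, m + 1 ≤ i → i < n → y i = y (n - 1))))
    (hxlt : x 0 < x (n - 1)) (hylt : y 0 < y (n - 1)) :
    ∑ i ∈ Finset.range n,
        (x i - (∑ j ∈ Finset.range n, x j) / n) *
          (y i - (∑ j ∈ Finset.range n, y j) / n)
      = (((n : ℝ) ^ 2 - 1) / (4 * n)) * (x (n - 1) - x 0) * (y (n - 1) - y 0) :=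
  bivariate_upper_bound_odd_attained_general n m hnm x y hconf
end

section
/- Let n ≥ 2 and suppose x_1 < x_2 = ... = x_n and y_1 = y_2 = ... = y_{n-1} < y_n (or, symmetrically, x_1 = ... = x_{n-1} < x_n and y_1 < y_2 = ... = y_n). Then Σ_{i=1}^n (x_i - x̄)(y_i - ȳ) = (1/n)·(x_n - x_1)(y_n - y_1); that is, the lower bound 1/n for s_{xy}/((x_n - x_1)(y_n - y_1)) is attained by these configurations. -/
/-!
Since the deviations `y i - ȳ` sum to zero, the mean `x̄` may be replaced by any constant, in
particular by `x (n - 1)`. Then only the `i = 0` term survives, leaving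
`(x 0 - x (n - 1)) * (y 0 - ȳ)`, and `y 0 - ȳ = (y 0 - y (n - 1)) / n` because `y` takes the
value `y (n - 1)` only once. The symmetric configuration follows by exchanging `x` and `y`.
-/

open Finset

lemma Finset.sum_sub_sum_div_card_eq_zero {ι : Type*} (s : Finset ι) (f : ι → ℝ) :
    ∑ i ∈ s, (f i - (∑ j ∈ s, f j) / #s) = 0 := by
  rcases s.eq_empty_or_nonempty with rfl | hs
  · simp
  · rw [sum_sub_distrib, sum_const, nsmul_eq_mul, mul_div_cancel₀ _ (by simp [hs.ne_empty])]
    exact sub_self _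

lemma Finset.sum_centered_mul_eq_sum_sub_mul {ι : Type*} (s : Finset ι) (x y : ι → ℝ)
    (a c : ℝ) :
    ∑ i ∈ s, (x i - a) * (y i - (∑ j ∈ s, y j) / #s)
      = ∑ i ∈ s, (x i - c) * (y i - (∑ j ∈ s, y j) / #s) := by
  have hshift : ∀ i, (x i - a) * (y i - (∑ j ∈ s, y j) / #s)
      = (x i - c) * (y i - (∑ j ∈ s, y j) / #s) + (c - a) * (y i - (∑ j ∈ s, y j) / #s) :=
    fun i => by ring
  rw [sum_congr rfl fun i _ => hshift i, sum_add_distrib, ← mul_sum,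
    sum_sub_sum_div_card_eq_zero, mul_zero, add_zero]

lemma sum_range_sub_mul_of_eq_last {n : ℕ} (hn : 0 < n) (x g : ℕ → ℝ)
    (hx : ∀ i, 1 ≤ i → i < n → x i = x (n - 1)) :
    ∑ i ∈ range n, (x i - x (n - 1)) * g i = (x 0 - x (n - 1)) * g 0 := by
  obtain ⟨m, rfl⟩ : ∃ m, n = m + 1 := ⟨n - 1, by omega⟩
  rw [sum_range_succ', sum_eq_zero fun i hi => by
    rw [hx (i + 1) (by omega) (by simpa using hi), sub_self, zero_mul], zero_add]

lemma sum_range_of_eq_first {n : ℕ} (hn : 0 < n) (y : ℕ → ℝ) (hy : ∀ i < n - 1, y i = y 0) :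
    ∑ i ∈ range n, y i = (n - 1) * y 0 + y (n - 1) := by
  obtain ⟨m, rfl⟩ : ∃ m, n = m + 1 := ⟨n - 1, by omega⟩
  rw [sum_range_succ, sum_congr rfl fun i hi => hy i (by simpa using hi)]
  simp

lemma sum_centered_mul_of_step {n : ℕ} (hn : 0 < n) (x y : ℕ → ℝ)
    (hx : ∀ i, 1 ≤ i → i < n → x i = x (n - 1)) (hy : ∀ i < n - 1, y i = y 0) :
    ∑ i ∈ range n, (x i - (∑ j ∈ range n, x j) / n) * (y i - (∑ j ∈ range n, y j) / n)
      = (1 / (n : ℝ)) * (x (n - 1) - x 0) * (y (n - 1) - y 0) := by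
  have hcard : ((#(range n) : ℕ) : ℝ) = n := by rw [card_range]
  rw [← hcard, sum_centered_mul_eq_sum_sub_mul _ x y _ (x (n - 1)), hcard,
    sum_range_sub_mul_of_eq_last hn x _ hx, sum_range_of_eq_first hn y hy]
  field_simp
  ring

/-- For `n ≥ 2`, if `x_1 < x_2 = ⋯ = x_n` and
`y_1 = ⋯ = y_{n-1} < y_n` (or symmetrically with the roles of `x` and `y`
exchanged), then `∑ (x i - x̄)(y i - ȳ) = (1/n)(x (n-1) - x 0)(y (n-1) - y 0)`. -/
theorem bivariate_lower_bound_attained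
    (n : ℕ) (hn : 2 ≤ n) (x y : ℕ → ℝ)
    (hconf :
      ((∀ i, 1 ≤ i → i < n → x i = x (n - 1)) ∧ x 0 < x (n - 1) ∧
       (∀ i < n - 1, y i = y 0) ∧ y 0 < y (n - 1)) ∨
      ((∀ i < n - 1, x i = x 0) ∧ x 0 < x (n - 1) ∧
       (∀ i, 1 ≤ i → i < n → y i = y (n - 1)) ∧ y 0 < y (n - 1))) :
    ∑ i ∈ Finset.range n,
        (x i - (∑ j ∈ Finset.range n, x j) / n) *
          (y i - (∑ j ∈ Finset.range n, y j) / n)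
      = (1 / (n : ℝ)) * (x (n - 1) - x 0) * (y (n - 1) - y 0) := by
  have hpos : 0 < n := by omega
  rcases hconf with ⟨hx, -, hy, -⟩ | ⟨hx, -, hy, -⟩
  · exact sum_centered_mul_of_step hpos x y hx hy
  · simp_rw [mul_comm (x _ - _), sum_centered_mul_of_step hpos y x hy hx]
    ring
end
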